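/- arXiv:2112.10663 — 4 statements merged into one kernel-verified Lean document; each statement's English description precedes it below -/
import Mathlib

section
/- If X is a heavy-tailed random variable (i.e., E[e^{t|X|}] = ∞ for all t > 0) and Y is an independent symmetric continuous random variable with a density, then the product XY is also heavy-tailed. -/
/-!
Scaling by a fixed `y ≠ 0` preserves heavy tails, so for every such `y` the conditional moment
generating integral `∫ e^{t|x y|} dP_X(x)` is infinite. By independence the law of `(X, Y)` is
`P_X ⊗ P_Y`, so `E[e^{t|XY|}]` is the `P_Y`-integral of these inner integrals; it is infinite as
soon as `Y ≠ 0` with positive probability, which the density of `Y` guarantees.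
-/

open MeasureTheory ProbabilityTheory Real
open scoped ENNReal NNReal

def HeavyTailed {Ω : Type*} [MeasurableSpace Ω] (μ : Measure Ω) (X : Ω → ℝ) : Prop :=
  ∀ t : ℝ, 0 < t → ∫⁻ ω, ENNReal.ofReal (Real.exp (t * |X ω|)) ∂μ = ⊤

namespace HeavyTailed

variable {Ω : Type*} [MeasurableSpace Ω] {μ : Measure Ω} {X Y : Ω → ℝ}

theorem mul_const (hheavy : HeavyTailed μ X) {y : ℝ} (hy : y ≠ 0) :
    HeavyTailed μ (fun ω => X ω * y) := by
  intro t ht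
  convert hheavy (t * |y|) (mul_pos ht (abs_pos.mpr hy)) using 5
  rw [abs_mul]
  ring

theorem mul_of_indepFun [IsFiniteMeasure μ] (hheavy : HeavyTailed μ X)
    (hX : Measurable X) (hY : Measurable Y) (hindep : IndepFun X Y μ)
    (hY0 : μ.map Y {0}ᶜ ≠ 0) :
    HeavyTailed μ (fun ω => X ω * Y ω) := by
  intro t ht
  set g : ℝ × ℝ → ℝ≥0∞ := fun p => ENNReal.ofReal (exp (t * |p.1 * p.2|))
  have hg : Measurable g := by fun_prop
  have hinner : ∀ y ∈ ({0}ᶜ : Set ℝ), ∫⁻ x, g (x, y) ∂(μ.map X) = ⊤ := fun y hy => by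
    rw [lintegral_map (by fun_prop) hX]
    exact hheavy.mul_const hy t ht
  have hsplit : ∫⁻ ω, g (X ω, Y ω) ∂μ = ∫⁻ y, ∫⁻ x, g (x, y) ∂(μ.map X) ∂(μ.map Y) := by
    rw [← lintegral_map hg (hX.prodMk hY), hindep.map_prod_eq_prod_map_map hX.aemeasurable
      hY.aemeasurable, lintegral_prod_symm _ hg.aemeasurable]
  refine top_le_iff.mp ?_
  calc ⊤ = ∫⁻ _ in ({0}ᶜ : Set ℝ), ⊤ ∂(μ.map Y) := by
        rw [setLIntegral_const, ENNReal.top_mul hY0]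
    _ = ∫⁻ y in ({0}ᶜ : Set ℝ), ∫⁻ x, g (x, y) ∂(μ.map X) ∂(μ.map Y) :=
        (setLIntegral_congr_fun (measurableSet_singleton 0).compl hinner).symm
    _ ≤ ∫⁻ y, ∫⁻ x, g (x, y) ∂(μ.map X) ∂(μ.map Y) := setLIntegral_le_lintegral _ _
    _ = ∫⁻ ω, g (X ω, Y ω) ∂μ := hsplit.symm

end HeavyTailed

theorem heavyTailed_mul_of_indep_symm_density_general
    {Ω : Type*} [MeasurableSpace Ω] (μ : Measure Ω) [IsProbabilityMeasure μ]
    (X Y : Ω → ℝ) (hX : Measurable X) (hY : Measurable Y)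
    (hindep : IndepFun X Y μ)
    (hheavy : HeavyTailed μ X)
    (f : ℝ → ℝ≥0∞)
    (hdens : Measure.map Y μ = volume.withDensity f) :
    HeavyTailed μ (fun ω => X ω * Y ω) := by
  have : IsProbabilityMeasure (μ.map Y) := Measure.isProbabilityMeasure_map hY.aemeasurable
  have hY0 : μ.map Y {0} = 0 := by
    rw [hdens]
    exact withDensity_absolutelyContinuous _ _ (measure_singleton 0)
  refine hheavy.mul_of_indepFun hX hY hindep ?_
  rw [prob_compl_eq_one_sub (measurableSet_singleton 0), hY0]
  simp

/-- If `X` is heavy-tailed and `Y` is an independent symmetric random variable admitting a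
Lebesgue density, then the product `X * Y` is heavy-tailed. -/
theorem heavyTailed_mul_of_indep_symm_density
    {Ω : Type*} [MeasurableSpace Ω] (μ : Measure Ω) [IsProbabilityMeasure μ]
    (X Y : Ω → ℝ) (hX : Measurable X) (hY : Measurable Y)
    (hindep : IndepFun X Y μ)
    (hheavy : HeavyTailed μ X)
    (hsymm : Measure.map Y μ = Measure.map (fun ω => -(Y ω)) μ)
    (f : ℝ → ℝ≥0∞) (hf : Measurable f)
    (hdens : Measure.map Y μ = volume.withDensity f) :
    HeavyTailed μ (fun ω => X ω * Y ω) :=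
  heavyTailed_mul_of_indep_symm_density_general μ X Y hX hY hindep hheavy f hdens
end

section
/- If X and Y are independent heavy-tailed random variables, Y symmetric with a density, then X + Y is heavy-tailed. -/
open MeasureTheory ProbabilityTheory Real
open scoped ENNReal NNReal

/-- If `X` and `Y` are independent heavy-tailed random variables, `Y` symmetric with a density
(and `X` admitting a density as well), then `X + Y` is heavy-tailed. -/
theorem heavyTailed_add_of_indep_heavy_symm_density
    {Ω : Type*} [MeasurableSpace Ω] (μ : Measure Ω) [IsProbabilityMeasure μ]
    (X Y : Ω → ℝ) (hX : Measurable X) (hY : Measurable Y)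
    (hindep : IndepFun X Y μ)
    (hheavyX : HeavyTailed μ X) (hheavyY : HeavyTailed μ Y)
    (hsymm : Measure.map Y μ = Measure.map (fun ω => -(Y ω)) μ)
    (fX fY : ℝ → ℝ≥0∞) (hfX : Measurable fX) (hfY : Measurable fY)
    (hdensX : Measure.map X μ = volume.withDensity fX)
    (hdensY : Measure.map Y μ = volume.withDensity fY) :
    HeavyTailed μ (fun ω => X ω + Y ω) := by
  intro t ht
  -- independence of X and -Y
  have hnY : Measurable (fun ω => -(Y ω)) := hY.neg
  have hindep' : IndepFun X (fun ω => -(Y ω)) μ :=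
    hindep.comp measurable_id measurable_neg
  -- equality of joint laws
  have hmap : Measure.map (fun ω => (X ω, Y ω)) μ
      = Measure.map (fun ω => (X ω, -(Y ω))) μ := by
    rw [(indepFun_iff_map_prod_eq_prod_map_map hX.aemeasurable hY.aemeasurable).mp hindep,
      (indepFun_iff_map_prod_eq_prod_map_map hX.aemeasurable hnY.aemeasurable).mp hindep',
      hsymm]
  -- the integrand as a function of the pair
  have hgm : Measurable fun p : ℝ × ℝ => ENNReal.ofReal (Real.exp (t * |p.1 + p.2|)) := by
    apply ENNReal.measurable_ofReal.comp
    exact (Real.continuous_exp.comp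
      (continuous_const.mul ((continuous_fst.add continuous_snd).abs))).measurable
  -- E[e^{t|X+Y|}] = E[e^{t|X-Y|}]
  have hkey : ∫⁻ ω, ENNReal.ofReal (Real.exp (t * |X ω + Y ω|)) ∂μ
      = ∫⁻ ω, ENNReal.ofReal (Real.exp (t * |X ω - Y ω|)) ∂μ := by
    have h1 : ∫⁻ ω, ENNReal.ofReal (Real.exp (t * |X ω + Y ω|)) ∂μ
        = ∫⁻ p : ℝ × ℝ, ENNReal.ofReal (Real.exp (t * |p.1 + p.2|))
          ∂(Measure.map (fun ω => (X ω, Y ω)) μ) := by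
      rw [lintegral_map hgm (hX.prodMk hY)]
    have h2 : (∫⁻ p : ℝ × ℝ, ENNReal.ofReal (Real.exp (t * |p.1 + p.2|))
          ∂(Measure.map (fun ω => (X ω, -(Y ω))) μ))
        = ∫⁻ ω, ENNReal.ofReal (Real.exp (t * |X ω - Y ω|)) ∂μ := by
      rw [lintegral_map hgm (hX.prodMk hnY)]
      simp [sub_eq_add_neg]
    rw [h1, hmap, h2]
  -- pointwise bound: e^{t|x|} ≤ e^{t|x+y|} + e^{t|x-y|}
  have hpt : ∀ ω, ENNReal.ofReal (Real.exp (t * |X ω|))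
      ≤ ENNReal.ofReal (Real.exp (t * |X ω + Y ω|))
        + ENNReal.ofReal (Real.exp (t * |X ω - Y ω|)) := by
    intro ω
    set x := X ω; set y := Y ω
    have habs : |x| ≤ max (|x + y|) (|x - y|) := by
      have h2 : 2 * |x| ≤ |x + y| + |x - y| := by
        have : |(x + y) + (x - y)| ≤ |x + y| + |x - y| := abs_add_le _ _
        calc 2 * |x| = |(x + y) + (x - y)| := by rw [show (x+y)+(x-y) = 2*x by ring, abs_mul]; simp
          _ ≤ _ := this
      have hmax : |x + y| + |x - y| ≤ 2 * max (|x + y|) (|x - y|) := by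
        have := le_max_left (|x + y|) (|x - y|)
        have := le_max_right (|x + y|) (|x - y|)
        linarith
      linarith
    rcases le_or_gt (|x|) (|x + y|) with h | h
    · calc ENNReal.ofReal (Real.exp (t * |x|))
          ≤ ENNReal.ofReal (Real.exp (t * |x + y|)) := by
            exact ENNReal.ofReal_le_ofReal (Real.exp_le_exp.mpr
              (mul_le_mul_of_nonneg_left h ht.le))
        _ ≤ _ := le_self_add
    · have h' : |x| ≤ |x - y| := by
        rcases max_cases (|x + y|) (|x - y|) with ⟨he, _⟩ | ⟨he, _⟩
        · exact absurd (habs.trans_eq he) (not_le.mpr h)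
        · exact habs.trans_eq he
      calc ENNReal.ofReal (Real.exp (t * |x|))
          ≤ ENNReal.ofReal (Real.exp (t * |x - y|)) := by
            exact ENNReal.ofReal_le_ofReal (Real.exp_le_exp.mpr
              (mul_le_mul_of_nonneg_left h' ht.le))
        _ ≤ _ := le_add_self
  -- combine
  have hmono : (⊤ : ℝ≥0∞) ≤ ∫⁻ ω, (ENNReal.ofReal (Real.exp (t * |X ω + Y ω|))
      + ENNReal.ofReal (Real.exp (t * |X ω - Y ω|))) ∂μ := by
    rw [← hheavyX t ht]
    exact lintegral_mono hpt
  have hmeas1 : Measurable fun ω => ENNReal.ofReal (Real.exp (t * |X ω + Y ω|)) :=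
    (((hX.add hY).abs.const_mul t).exp).ennreal_ofReal
  rw [lintegral_add_left hmeas1, ← hkey] at hmono
  have htop : ∫⁻ ω, ENNReal.ofReal (Real.exp (t * |X ω + Y ω|)) ∂μ
      + ∫⁻ ω, ENNReal.ofReal (Real.exp (t * |X ω + Y ω|)) ∂μ = ⊤ :=
    top_le_iff.mp hmono
  by_contra hne
  exact hne (by simpa using (ENNReal.add_eq_top.mp htop).elim id id)
end

section
/- Consider a one-hidden-layer network u(x) = Σ_{i=1}^{D₁} V_i^{(1)} φ(b_i^{(0)} + Σ_j V_{ij}^{(0)} x_j) with input x ∈ ℝ^{D₀}. If the V_{ij}^{(0)} are i.i.d. symmetric heavy-tailed, the b_i^{(0)} are i.i.d. symmetric, the V_i^{(1)} are i.i.d. symmetric continuous random variables, all mutually independent, and φ is differentiable with |φ'| bounded away from zero, then each partial derivative ∂_{x_k} u(x) = Σ_i V_i^{(1)} V_{ik}^{(0)} φ'(b_i^{(0)} + Σ_j V_{ij}^{(0)} x_j) is heavy-tailed for every fixed x. -/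
/-!
Fix a hidden unit `i₀` and write its contribution as `Z · W` with `W = V¹_{i₀}` and
`Z = V⁰_{i₀k} φ'(b⁰_{i₀} + ∑ⱼ V⁰_{i₀j} xⱼ)`. Since `|Z| ≥ c |V⁰_{i₀k}|`, `Z` is heavy-tailed.
`W` is independent of `Z`, symmetric, and has a density, so `P(|W| ≥ ε) > 0` for some `ε > 0`;
symmetry gives `E e^{aW} ≥ ½ E e^{|aW|} ≥ ½ P(|W| ≥ ε) e^{ε|a|}`, and integrating over `Z`
shows `E e^{tZW} = ∞` for every `t > 0`. The other hidden units are independent of unit `i₀`,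
so the moment generating function of `∂_{x_k} u(x)` factors and is infinite at every `t > 0`;
finally `e^{t|y|} ≥ e^{ty}`.
-/

open MeasureTheory ProbabilityTheory Real
open scoped ENNReal NNReal

/-- A distribution `ν` on `ℝ` is heavy-tailed if `∫ e^{t|x|} dν(x) = ∞` for all `t > 0`. -/
def HeavyTailedDist (ν : Measure ℝ) : Prop :=
  ∀ t : ℝ, 0 < t → ∫⁻ x, ENNReal.ofReal (Real.exp (t * |x|)) ∂ν = ⊤

section HeavyTails

variable {Ω : Type*} [MeasurableSpace Ω] {μ : Measure Ω}

lemma heavyTailed_iff_heavyTailedDist_map {X : Ω → ℝ} (hX : Measurable X) :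
    HeavyTailed μ X ↔ HeavyTailedDist (μ.map X) :=
  forall₂_congr fun t _ => by rw [lintegral_map (by fun_prop) hX]

lemma HeavyTailed.of_mul_abs_le {X Y : Ω → ℝ} (hX : HeavyTailed μ X) {c : ℝ} (hc : 0 < c)
    (hXY : ∀ ω, c * |X ω| ≤ |Y ω|) : HeavyTailed μ Y := by
  intro t ht
  refine top_le_iff.mp ((hX (t * c) (by positivity)).symm.trans_le (lintegral_mono fun ω => ?_))
  refine ENNReal.ofReal_le_ofReal (exp_le_exp.mpr ?_)
  rw [mul_assoc]
  exact mul_le_mul_of_nonneg_left (hXY ω) ht.le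

lemma heavyTailed_of_lintegral_exp_eq_top {X : Ω → ℝ}
    (hX : ∀ t : ℝ, 0 < t → ∫⁻ ω, ENNReal.ofReal (exp (t * X ω)) ∂μ = ⊤) : HeavyTailed μ X := by
  intro t ht
  refine top_le_iff.mp ((hX t ht).symm.trans_le (lintegral_mono fun ω => ?_))
  gcongr
  exact le_abs_self _

lemma lintegral_exp_add_eq_top_of_indepFun [NeZero μ] {X Y : Ω → ℝ} (hXm : Measurable X)
    (hYm : Measurable Y) (hXY : IndepFun X Y μ) {t : ℝ}
    (hX : ∫⁻ ω, ENNReal.ofReal (exp (t * X ω)) ∂μ = ⊤) :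
    ∫⁻ ω, ENNReal.ofReal (exp (t * (X ω + Y ω))) ∂μ = ⊤ := by
  set f : ℝ → ℝ≥0∞ := fun y => ENNReal.ofReal (exp (t * y))
  have hf : Measurable f := by fun_prop
  have hY : ∫⁻ ω, f (Y ω) ∂μ ≠ 0 := by
    rw [Ne, lintegral_eq_zero_iff (f := fun ω => f (Y ω)) (hf.comp hYm)]
    intro h
    obtain ⟨ω, hω⟩ := h.exists
    exact (ENNReal.ofReal_pos.mpr (exp_pos _)).ne' hω
  calc ∫⁻ ω, ENNReal.ofReal (exp (t * (X ω + Y ω))) ∂μ = ∫⁻ ω, ((f ∘ X) * (f ∘ Y)) ω ∂μ := by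
        simp only [f, Pi.mul_apply, Function.comp_apply, mul_add, exp_add,
          ENNReal.ofReal_mul (exp_pos _).le]
    _ = (∫⁻ ω, f (X ω) ∂μ) * ∫⁻ ω, f (Y ω) ∂μ :=
        lintegral_mul_eq_lintegral_mul_lintegral_of_indepFun (hf.comp hXm) (hf.comp hYm)
          (hXY.comp hf hf)
    _ = ⊤ := by rw [hX, ENNReal.top_mul hY]

end HeavyTails

section SymmetricMultiplier

variable {ν : Measure ℝ}

lemma exists_pos_measure_le_abs_ne_zero (hν : ν {0}ᶜ ≠ 0) :
    ∃ ε : ℝ, 0 < ε ∧ ν {w | ε ≤ |w|} ≠ 0 := by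
  by_contra! h
  refine hν (measure_mono_null (fun w (hw : w ≠ 0) => ?_) (measure_iUnion_null_iff.mpr
    fun n : ℕ => h (1 / (n + 1)) (by positivity)))
  obtain ⟨n, hn⟩ := exists_nat_one_div_lt (abs_pos.mpr hw)
  exact Set.mem_iUnion.mpr ⟨n, hn.le⟩

lemma measure_compl_singleton_ne_zero (hν : ν ≪ volume) (h0 : ν ≠ 0) (a : ℝ) :
    ν {a}ᶜ ≠ 0 := by
  intro h
  apply h0
  rw [← Measure.measure_univ_eq_zero, ← Set.union_compl_self {a}]
  exact measure_union_null (hν (measure_singleton a)) h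

variable (hν : ν.map (fun w => -w) = ν)
include hν

lemma lintegral_exp_abs_mul_le (a : ℝ) :
    ∫⁻ w, ENNReal.ofReal (exp |a * w|) ∂ν ≤ 2 * ∫⁻ w, ENNReal.ofReal (exp (a * w)) ∂ν := by
  have hneg : ∫⁻ w, ENNReal.ofReal (exp (-(a * w))) ∂ν =
      ∫⁻ w, ENNReal.ofReal (exp (a * w)) ∂ν := by
    conv_rhs => rw [← hν, lintegral_map (by fun_prop) measurable_neg]
    simp only [mul_neg]
  calc ∫⁻ w, ENNReal.ofReal (exp |a * w|) ∂ν
      ≤ ∫⁻ w, ENNReal.ofReal (exp (a * w)) + ENNReal.ofReal (exp (-(a * w))) ∂ν := by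
        refine lintegral_mono fun w => ?_
        rw [← ENNReal.ofReal_add (exp_pos _).le (exp_pos _).le]
        exact ENNReal.ofReal_le_ofReal (exp_abs_le _)
    _ = 2 * ∫⁻ w, ENNReal.ofReal (exp (a * w)) ∂ν := by
        rw [lintegral_add_left (by fun_prop), hneg, two_mul]

lemma measure_le_abs_mul_exp_le_lintegral_exp (ε a : ℝ) :
    ν {w | ε ≤ |w|} * ENNReal.ofReal (exp (ε * |a|)) ≤
      2 * ∫⁻ w, ENNReal.ofReal (exp (a * w)) ∂ν :=
  calc ν {w | ε ≤ |w|} * ENNReal.ofReal (exp (ε * |a|))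
      = ∫⁻ _ in {w | ε ≤ |w|}, ENNReal.ofReal (exp (ε * |a|)) ∂ν := by
        rw [setLIntegral_const, mul_comm]
    _ ≤ ∫⁻ w in {w | ε ≤ |w|}, ENNReal.ofReal (exp |a * w|) ∂ν := by
        refine setLIntegral_mono (by fun_prop) fun w (hw : ε ≤ |w|) => ?_
        gcongr
        rw [abs_mul, mul_comm]
        exact mul_le_mul_of_nonneg_left hw (abs_nonneg a)
    _ ≤ ∫⁻ w, ENNReal.ofReal (exp |a * w|) ∂ν := setLIntegral_le_lintegral _ _
    _ ≤ 2 * ∫⁻ w, ENNReal.ofReal (exp (a * w)) ∂ν := lintegral_exp_abs_mul_le hν a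

end SymmetricMultiplier

lemma lintegral_exp_mul_eq_top_of_indepFun {Ω : Type*} [MeasurableSpace Ω] {μ : Measure Ω}
    [IsFiniteMeasure μ] {X W : Ω → ℝ} (hXm : Measurable X) (hWm : Measurable W)
    (hXW : IndepFun X W μ) (hX : HeavyTailed μ X)
    (hWsymm : (μ.map W).map (fun w => -w) = μ.map W) (hW0 : μ.map W {0}ᶜ ≠ 0)
    {t : ℝ} (ht : 0 < t) :
    ∫⁻ ω, ENNReal.ofReal (exp (t * (X ω * W ω))) ∂μ = ⊤ := by
  obtain ⟨ε, hε, hWε⟩ := exists_pos_measure_le_abs_ne_zero hW0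
  have hmeas : Measurable fun p : ℝ × ℝ => ENNReal.ofReal (exp (t * (p.1 * p.2))) := by fun_prop
  have hiterated : ∫⁻ ω, ENNReal.ofReal (exp (t * (X ω * W ω))) ∂μ =
      ∫⁻ z, ∫⁻ w, ENNReal.ofReal (exp (t * (z * w))) ∂(μ.map W) ∂(μ.map X) := by
    rw [← lintegral_prod _ hmeas.aemeasurable,
      ← (indepFun_iff_map_prod_eq_prod_map_map hXm.aemeasurable hWm.aemeasurable).mp hXW,
      lintegral_map hmeas (hXm.prodMk hWm)]
  have hXε := (heavyTailed_iff_heavyTailedDist_map hXm).mp hX (ε * t) (by positivity)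
  have htop : ⊤ ≤ 2 * ∫⁻ ω, ENNReal.ofReal (exp (t * (X ω * W ω))) ∂μ :=
    calc (⊤ : ℝ≥0∞)
        = μ.map W {w | ε ≤ |w|} * ∫⁻ z, ENNReal.ofReal (exp (ε * t * |z|)) ∂(μ.map X) := by
          rw [hXε, ENNReal.mul_top hWε]
      _ = ∫⁻ z, μ.map W {w | ε ≤ |w|} * ENNReal.ofReal (exp (ε * |t * z|)) ∂(μ.map X) := by
          rw [← lintegral_const_mul _ (by fun_prop)]
          simp only [abs_mul, abs_of_pos ht, mul_assoc]
      _ ≤ ∫⁻ z, 2 * ∫⁻ w, ENNReal.ofReal (exp (t * z * w)) ∂(μ.map W) ∂(μ.map X) :=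
          lintegral_mono fun z => measure_le_abs_mul_exp_le_lintegral_exp hWsymm ε (t * z)
      _ = 2 * ∫⁻ ω, ENNReal.ofReal (exp (t * (X ω * W ω))) ∂μ := by
          rw [lintegral_const_mul' _ _ ENNReal.ofNat_ne_top, hiterated]
          simp only [mul_assoc]
  by_contra hne
  exact ENNReal.mul_ne_top ENNReal.ofNat_ne_top hne (top_le_iff.mp htop)

section IndependentBlocks

variable {Ω ι β : Type*} [mβ : MeasurableSpace β] {F : ι → Ω → β}

variable (F) in
lemma measurable_biSup_comap {S : Set ι} {i : ι} (hi : i ∈ S) :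
    Measurable[⨆ j ∈ S, mβ.comap (F j)] (F i) :=
  Measurable.of_comap_le (le_iSup₂ (f := fun j (_ : j ∈ S) => mβ.comap (F j)) i hi)

lemma ProbabilityTheory.iIndepFun.indepFun_of_measurable_biSup [MeasurableSpace Ω]
    {μ : Measure Ω} (hF : ∀ i, Measurable (F i)) (hind : iIndepFun F μ) {S T : Set ι}
    (hST : Disjoint S T) {γ γ' : Type*} [MeasurableSpace γ] [MeasurableSpace γ'] {X : Ω → γ} {Y : Ω → γ'}
    (hX : Measurable[⨆ i ∈ S, mβ.comap (F i)] X) (hY : Measurable[⨆ i ∈ T, mβ.comap (F i)] Y) :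
    IndepFun X Y μ :=
  (IndepFun_iff_Indep X Y μ).mpr <| indep_of_indep_of_le
    (indep_iSup_of_disjoint (fun i => (hF i).comap_le) hind.iIndep hST) hX.comap_le hY.comap_le

end IndependentBlocks

section OneHiddenLayer

variable {Ω : Type*} {D₀ D₁ : ℕ} {φ : ℝ → ℝ} {V0 : Fin D₁ → Fin D₀ → Ω → ℝ}
  {V1 b : Fin D₁ → Ω → ℝ} {x : Fin D₀ → ℝ} {k : Fin D₀}

variable (φ V0 b x k) in
noncomputable def hiddenUnitPartialDeriv (i : Fin D₁) (ω : Ω) : ℝ :=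
  V0 i k ω * deriv φ (b i ω + ∑ j, V0 i j ω * x j)

lemma measurable_hiddenUnitPartialDeriv {m : MeasurableSpace Ω} {i : Fin D₁}
    (hV0 : ∀ j, Measurable (V0 i j)) (hb : Measurable (b i)) :
    Measurable (hiddenUnitPartialDeriv φ V0 b x k i) :=
  (hV0 k).mul ((measurable_deriv φ).comp
    (hb.add (Finset.measurable_sum _ fun j _ => (hV0 j).mul_const _)))

lemma heavyTailed_hiddenUnitPartialDeriv [MeasurableSpace Ω] {μ : Measure Ω} {i : Fin D₁}
    (hV0 : HeavyTailed μ (V0 i k)) {c : ℝ} (hc : 0 < c) (hφ' : ∀ z, c ≤ |deriv φ z|) :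
    HeavyTailed μ (hiddenUnitPartialDeriv φ V0 b x k i) :=
  hV0.of_mul_abs_le hc fun ω => by
    rw [hiddenUnitPartialDeriv, abs_mul, mul_comm]
    exact mul_le_mul_of_nonneg_left (hφ' _) (abs_nonneg _)

abbrev NetworkParamIndex (D₀ D₁ : ℕ) : Type := (Fin D₁ × Fin D₀) ⊕ (Fin D₁ ⊕ Fin D₁)

variable (V0 V1 b) in
def networkParams (s : NetworkParamIndex D₀ D₁) : Ω → ℝ :=
  Sum.elim (fun p => V0 p.1 p.2) (Sum.elim b V1) s

def paramNeuron : NetworkParamIndex D₀ D₁ → Fin D₁ :=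
  Sum.elim Prod.fst (Sum.elim id id)

lemma measurable_hiddenUnitPartialDeriv_mul {S : Set (NetworkParamIndex D₀ D₁)} {i : Fin D₁}
    (hS : ∀ s, paramNeuron s = i → s ∈ S) :
    Measurable[⨆ s ∈ S, MeasurableSpace.comap (networkParams V0 V1 b s) inferInstance]
      fun ω => hiddenUnitPartialDeriv φ V0 b x k i ω * V1 i ω :=
  (measurable_hiddenUnitPartialDeriv
    (fun j => measurable_biSup_comap (networkParams V0 V1 b) (hS (.inl (i, j)) rfl))
    (measurable_biSup_comap (networkParams V0 V1 b) (hS (.inr (.inl i)) rfl))).mul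
    (measurable_biSup_comap (networkParams V0 V1 b) (hS (.inr (.inr i)) rfl))

variable [MeasurableSpace Ω] {μ : Measure Ω} (hV0 : ∀ i j, Measurable (V0 i j))
  (hV1 : ∀ i, Measurable (V1 i)) (hb : ∀ i, Measurable (b i))
include hV0 hV1 hb

lemma measurable_networkParams : ∀ s, Measurable (networkParams V0 V1 b s)
  | .inl (i, j) => hV0 i j
  | .inr (.inl i) => hb i
  | .inr (.inr i) => hV1 i

variable (hindep : iIndepFun (networkParams V0 V1 b) μ)
include hindep

lemma indepFun_hiddenUnitPartialDeriv_outputWeight (i : Fin D₁) :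
    IndepFun (hiddenUnitPartialDeriv φ V0 b x k i) (V1 i) μ :=
  hindep.indepFun_of_measurable_biSup (measurable_networkParams hV0 hV1 hb)
    (Set.disjoint_sdiff_left (t := {s | paramNeuron s = i}) (s := {.inr (.inr i)}))
    (measurable_hiddenUnitPartialDeriv
      (fun j => measurable_biSup_comap (networkParams V0 V1 b) (i := .inl (i, j))
        ⟨rfl, by simp⟩)
      (measurable_biSup_comap (networkParams V0 V1 b) (i := .inr (.inl i)) ⟨rfl, by simp⟩))
    (measurable_biSup_comap (networkParams V0 V1 b) (i := .inr (.inr i)) rfl)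

lemma indepFun_hiddenUnitPartialDeriv_mul_sum_erase (i : Fin D₁) :
    IndepFun (fun ω => hiddenUnitPartialDeriv φ V0 b x k i ω * V1 i ω)
      (fun ω => ∑ i' ∈ Finset.univ.erase i, hiddenUnitPartialDeriv φ V0 b x k i' ω * V1 i' ω)
      μ :=
  hindep.indepFun_of_measurable_biSup (measurable_networkParams hV0 hV1 hb)
    (S := {s | paramNeuron s = i}) disjoint_compl_right
    (measurable_hiddenUnitPartialDeriv_mul fun _ => id)
    (Finset.measurable_sum _ fun i' hi' => measurable_hiddenUnitPartialDeriv_mul fun _ hs => by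
      simpa [hs] using Finset.ne_of_mem_erase hi')

end OneHiddenLayer

theorem one_layer_partial_derivative_heavyTailed_general
    {Ω : Type*} [MeasurableSpace Ω] (μ : Measure Ω) [IsProbabilityMeasure μ]
    (D₀ D₁ : ℕ) (hD₁ : 0 < D₁)
    (V0 : Fin D₁ → Fin D₀ → Ω → ℝ) (V1 b : Fin D₁ → Ω → ℝ)
    (hV0 : ∀ i j, Measurable (V0 i j)) (hV1 : ∀ i, Measurable (V1 i))
    (hb : ∀ i, Measurable (b i))
    -- mutual independence of all weights and biases
    (hindep : iIndepFun
      (fun s : (Fin D₁ × Fin D₀) ⊕ (Fin D₁ ⊕ Fin D₁) =>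
        Sum.elim (fun p => V0 p.1 p.2) (Sum.elim b V1) s) μ)
    -- the V⁰_{ij} are i.i.d. symmetric heavy-tailed
    (νV : Measure ℝ) (hνVid : ∀ i j, Measure.map (V0 i j) μ = νV)
    (hνVheavy : HeavyTailedDist νV)
    -- the V¹_i are i.i.d. symmetric continuous (with a density)
    (νW : Measure ℝ) (hνWid : ∀ i, Measure.map (V1 i) μ = νW)
    (hνWsymm : Measure.map (fun x : ℝ => -x) νW = νW)
    (fW : ℝ → ℝ≥0∞) (hνWdens : νW = volume.withDensity fW)
    -- the activation function
    (φ : ℝ → ℝ)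
    (c : ℝ) (hc : 0 < c) (hφ' : ∀ z : ℝ, c ≤ |deriv φ z|)
    -- fixed input
    (x : Fin D₀ → ℝ) (k : Fin D₀) :
    HeavyTailed μ (fun ω =>
      ∑ i, V1 i ω * V0 i k ω * deriv φ (b i ω + ∑ j, V0 i j ω * x j)) := by
  let i₀ : Fin D₁ := ⟨0, hD₁⟩
  have hZ : HeavyTailed μ (hiddenUnitPartialDeriv φ V0 b x k i₀) :=
    heavyTailed_hiddenUnitPartialDeriv
      ((heavyTailed_iff_heavyTailedDist_map (hV0 i₀ k)).mpr (hνVid i₀ k ▸ hνVheavy)) hc hφ'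
  have hW0 : μ.map (V1 i₀) {0}ᶜ ≠ 0 :=
    measure_compl_singleton_ne_zero (hνWid i₀ ▸ hνWdens ▸ withDensity_absolutelyContinuous _ _)
      ((Measure.map_ne_zero_iff (hV1 i₀).aemeasurable).mpr (IsProbabilityMeasure.ne_zero μ)) 0
  have hterm : ∀ i, Measurable fun ω => hiddenUnitPartialDeriv φ V0 b x k i ω * V1 i ω :=
    fun i => (measurable_hiddenUnitPartialDeriv (hV0 i) (hb i)).mul (hV1 i)
  have hZW : ∀ t : ℝ, 0 < t → ∫⁻ ω, ENNReal.ofReal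
      (exp (t * (hiddenUnitPartialDeriv φ V0 b x k i₀ ω * V1 i₀ ω))) ∂μ = ⊤ := fun t ht =>
    lintegral_exp_mul_eq_top_of_indepFun (measurable_hiddenUnitPartialDeriv (hV0 i₀) (hb i₀))
      (hV1 i₀) (indepFun_hiddenUnitPartialDeriv_outputWeight hV0 hV1 hb hindep i₀) hZ
      (hνWid i₀ ▸ hνWsymm) hW0 ht
  refine heavyTailed_of_lintegral_exp_eq_top fun t ht => ?_
  convert lintegral_exp_add_eq_top_of_indepFun (hterm i₀)
    (Finset.measurable_sum (Finset.univ.erase i₀) fun i _ => hterm i)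
    (indepFun_hiddenUnitPartialDeriv_mul_sum_erase hV0 hV1 hb hindep i₀) (hZW t ht) using 5 with ω
  rw [Finset.add_sum_erase _ (fun i => hiddenUnitPartialDeriv φ V0 b x k i ω * V1 i ω)
    (Finset.mem_univ i₀)]
  exact congrArg (t * ·) (Finset.sum_congr rfl fun i _ => by
    simp only [hiddenUnitPartialDeriv]; ring)

/-- For a one-hidden-layer network `u(x) = ∑ i, V¹_i φ(b⁰_i + ∑ j, V⁰_{ij} x_j)` with i.i.d.
symmetric heavy-tailed input weights `V⁰_{ij}`, i.i.d. symmetric biases `b⁰_i`, i.i.d. symmetric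
continuous output weights `V¹_i`, all mutually independent, and `φ` differentiable with `|φ'|`
bounded away from zero, each partial derivative
`∂_{x_k} u(x) = ∑ i, V¹_i V⁰_{ik} φ'(b⁰_i + ∑ j, V⁰_{ij} x_j)` is heavy-tailed. -/
theorem one_layer_partial_derivative_heavyTailed
    {Ω : Type*} [MeasurableSpace Ω] (μ : Measure Ω) [IsProbabilityMeasure μ]
    (D₀ D₁ : ℕ) (hD₀ : 0 < D₀) (hD₁ : 0 < D₁)
    (V0 : Fin D₁ → Fin D₀ → Ω → ℝ) (V1 b : Fin D₁ → Ω → ℝ)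
    (hV0 : ∀ i j, Measurable (V0 i j)) (hV1 : ∀ i, Measurable (V1 i))
    (hb : ∀ i, Measurable (b i))
    -- mutual independence of all weights and biases
    (hindep : iIndepFun
      (fun s : (Fin D₁ × Fin D₀) ⊕ (Fin D₁ ⊕ Fin D₁) =>
        Sum.elim (fun p => V0 p.1 p.2) (Sum.elim b V1) s) μ)
    -- the V⁰_{ij} are i.i.d. symmetric heavy-tailed
    (νV : Measure ℝ) (hνVid : ∀ i j, Measure.map (V0 i j) μ = νV)
    (hνVsymm : Measure.map (fun x : ℝ => -x) νV = νV)
    (hνVheavy : HeavyTailedDist νV)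
    -- the b⁰_i are i.i.d. symmetric
    (νb : Measure ℝ) (hνbid : ∀ i, Measure.map (b i) μ = νb)
    (hνbsymm : Measure.map (fun x : ℝ => -x) νb = νb)
    -- the V¹_i are i.i.d. symmetric continuous (with a density)
    (νW : Measure ℝ) (hνWid : ∀ i, Measure.map (V1 i) μ = νW)
    (hνWsymm : Measure.map (fun x : ℝ => -x) νW = νW)
    (fW : ℝ → ℝ≥0∞) (hfW : Measurable fW) (hνWdens : νW = volume.withDensity fW)
    -- the activation function
    (φ : ℝ → ℝ) (hφ : Differentiable ℝ φ)
    (c : ℝ) (hc : 0 < c) (hφ' : ∀ z : ℝ, c ≤ |deriv φ z|)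
    -- fixed input
    (x : Fin D₀ → ℝ) (k : Fin D₀) :
    HeavyTailed μ (fun ω =>
      ∑ i, V1 i ω * V0 i k ω * deriv φ (b i ω + ∑ j, V0 i j ω * x j)) :=
  one_layer_partial_derivative_heavyTailed_general μ D₀ D₁ hD₁ V0 V1 b hV0 hV1 hb hindep νV hνVid
    hνVheavy νW hνWid hνWsymm fW hνWdens φ c hc hφ' x k
end

section
/- If X₁, …, X_n are independent and at least one X_i is heavy-tailed while the others are symmetric continuous random variables with densities, then any linear combination Σ c_i X_i with the heavy-tailed coefficient c_i ≠ 0 is heavy-tailed. -/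
/-! Write `∑ i, c i X_i = Y + Z` with `Y = c_{i₀} X_{i₀}` heavy-tailed and `Z` the remaining sum,
which is independent of `Y` and, as a sum of independent symmetric variables, symmetric.
Since `2|y| ≤ |y + z| + |y - z|`, we get `e^{t|y|} ≤ e^{t|y+z|} + e^{t|y-z|}`; averaging over `z`
against the symmetric law of `Z` gives `e^{t|y|} ≤ 2 E[e^{t|y + Z|}]`, and averaging over `y`
against the law of `Y` gives `E[e^{t|Y|}] ≤ 2 E[e^{t|Y + Z|}]`. -/

open MeasureTheory ProbabilityTheory Real
open scoped ENNReal NNReal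

section Symmetric

variable {Ω M : Type*} [MeasurableSpace Ω] {μ : Measure Ω} [MeasurableSpace M]

lemma Finset.measurable_sum' [AddCommMonoid M] [MeasurableAdd₂ M] {ι : Type*} (s : Finset ι)
    {X : ι → Ω → M} (hX : ∀ i, Measurable (X i)) : Measurable (∑ i ∈ s, X i) := by
  rw [Finset.sum_fn]
  exact Finset.measurable_sum s fun i _ => hX i

lemma map_neg_const_mul_eq {X : Ω → ℝ} (hX : Measurable X) (hsymm : μ.map (-X) = μ.map X)
    (c : ℝ) : μ.map (-fun ω => c * X ω) = μ.map (fun ω => c * X ω) := by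
  have hcnegX : (-fun ω => c * X ω) = (c * ·) ∘ (-X) := by
    funext ω
    simp
  have hcX : (fun ω => c * X ω) = (c * ·) ∘ X := rfl
  rw [hcnegX, hcX, ← Measure.map_map (measurable_const_mul c) hX.neg,
    ← Measure.map_map (measurable_const_mul c) hX, hsymm]

lemma ProbabilityTheory.IndepFun.map_neg_add_eq [AddCommGroup M] [MeasurableAdd₂ M]
    [MeasurableNeg M] [IsFiniteMeasure μ] {A B : Ω → M}
    (hA : Measurable A) (hB : Measurable B) (hAB : IndepFun A B μ)
    (hA_symm : μ.map (-A) = μ.map A) (hB_symm : μ.map (-B) = μ.map B) :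
    μ.map (-(A + B)) = μ.map (A + B) := by
  have hAB_neg : IndepFun (-A) (-B) μ := hAB.comp measurable_neg measurable_neg
  rw [neg_add, hAB_neg.map_add_eq_map_conv_map hA.neg hB.neg, hAB.map_add_eq_map_conv_map hA hB,
    hA_symm, hB_symm]

lemma ProbabilityTheory.iIndepFun.map_neg_finsetSum_eq [AddCommGroup M] [MeasurableAdd₂ M]
    [MeasurableNeg M] [IsFiniteMeasure μ] {ι : Type*} {X : ι → Ω → M}
    (hX : ∀ i, Measurable (X i)) (hindep : iIndepFun X μ) (s : Finset ι)
    (hsymm : ∀ i ∈ s, μ.map (-X i) = μ.map (X i)) :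
    μ.map (-∑ i ∈ s, X i) = μ.map (∑ i ∈ s, X i) := by
  classical
  induction s using Finset.induction_on with
  | empty => simp
  | insert j s hj ih =>
    rw [Finset.sum_insert hj]
    exact (hindep.indepFun_finsetSum_of_notMem hX hj).symm.map_neg_add_eq (hX j)
      (Finset.measurable_sum' s hX) (hsymm j (Finset.mem_insert_self j s))
      (ih fun i hi => hsymm i (Finset.mem_insert_of_mem hi))

end Symmetric

section HeavyTailed

variable {Ω : Type*} [MeasurableSpace Ω] {μ : Measure Ω}

lemma heavyTailed_iff_heavyTailed_map {X : Ω → ℝ} (hX : Measurable X) :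
    HeavyTailed μ X ↔ HeavyTailed (μ.map X) id := by
  refine forall₂_congr fun t _ => ?_
  rw [lintegral_map (by fun_prop) hX]
  rfl

lemma HeavyTailed.const_mul {X : Ω → ℝ} (hX : HeavyTailed μ X) {c : ℝ} (hc : c ≠ 0) :
    HeavyTailed μ (fun ω => c * X ω) := by
  intro t ht
  rw [← hX (t * |c|) (mul_pos ht (abs_pos.mpr hc))]
  simp only [abs_mul, mul_assoc]

lemma exp_mul_abs_le_exp_mul_abs_add_add_exp_mul_abs_sub {t : ℝ} (ht : 0 ≤ t) (y z : ℝ) :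
    exp (t * |y|) ≤ exp (t * |y + z|) + exp (t * |y - z|) := by
  have hy : 2 * |y| ≤ |y + z| + |y - z| := by
    simpa [← two_mul, abs_mul] using abs_add_le (y + z) (y - z)
  rcases le_total |y| |y + z| with h | h
  · have := exp_le_exp.mpr (mul_le_mul_of_nonneg_left h ht)
    linarith [exp_pos (t * |y - z|)]
  · have := exp_le_exp.mpr (mul_le_mul_of_nonneg_left (show |y| ≤ |y - z| by linarith) ht)
    linarith [exp_pos (t * |y + z|)]

lemma lintegral_exp_mul_abs_le_two_mul_lintegral_conv (ν₁ ν₂ : Measure ℝ) [IsProbabilityMeasure ν₂]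
    (hν₂ : ν₂.map Neg.neg = ν₂) {t : ℝ} (ht : 0 ≤ t) :
    ∫⁻ y, ENNReal.ofReal (exp (t * |y|)) ∂ν₁
      ≤ 2 * ∫⁻ x, ENNReal.ofReal (exp (t * |x|)) ∂(ν₁ ∗ ν₂) := by
  set F : ℝ → ℝ≥0∞ := fun x => ENNReal.ofReal (exp (t * |x|))
  have hF : Measurable F := by fun_prop
  have hreflect (y : ℝ) : ∫⁻ z, F (y - z) ∂ν₂ = ∫⁻ z, F (y + z) ∂ν₂ := by
    conv_lhs => rw [← hν₂]
    rw [lintegral_map (by fun_prop) measurable_neg]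
    simp only [sub_neg_eq_add]
  have hinner (y : ℝ) : F y ≤ 2 * ∫⁻ z, F (y + z) ∂ν₂ :=
    calc F y = ∫⁻ _, F y ∂ν₂ := by simp
      _ ≤ ∫⁻ z, (F (y + z) + F (y - z)) ∂ν₂ := lintegral_mono fun z => by
          rw [← ENNReal.ofReal_add (exp_pos _).le (exp_pos _).le]
          exact ENNReal.ofReal_le_ofReal
            (exp_mul_abs_le_exp_mul_abs_add_add_exp_mul_abs_sub ht y z)
      _ = 2 * ∫⁻ z, F (y + z) ∂ν₂ := by
          rw [lintegral_add_left (by fun_prop), hreflect, two_mul]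
  calc ∫⁻ y, F y ∂ν₁ ≤ ∫⁻ y, 2 * ∫⁻ z, F (y + z) ∂ν₂ ∂ν₁ := lintegral_mono hinner
    _ = 2 * ∫⁻ x, F x ∂(ν₁ ∗ ν₂) := by
        rw [Measure.lintegral_conv hF]
        exact lintegral_const_mul 2 (hF.comp measurable_add).lintegral_prod_right'

lemma HeavyTailed.conv {ν₁ ν₂ : Measure ℝ} [IsProbabilityMeasure ν₂] (h : HeavyTailed ν₁ id)
    (hν₂ : ν₂.map Neg.neg = ν₂) : HeavyTailed (ν₁ ∗ ν₂) id := by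
  intro t ht
  have hle := lintegral_exp_mul_abs_le_two_mul_lintegral_conv ν₁ ν₂ hν₂ ht.le
  rw [show ∫⁻ y, ENNReal.ofReal (exp (t * |y|)) ∂ν₁ = ⊤ from h t ht, top_le_iff,
    ENNReal.mul_eq_top] at hle
  simpa using hle

lemma HeavyTailed.add_of_indepFun [IsProbabilityMeasure μ] {Y Z : Ω → ℝ} (hYZ : IndepFun Y Z μ)
    (hY : Measurable Y) (hZ : Measurable Z) (hY_heavy : HeavyTailed μ Y)
    (hZ_symm : μ.map (-Z) = μ.map Z) : HeavyTailed μ (Y + Z) := by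
  have : IsProbabilityMeasure (μ.map Z) := Measure.isProbabilityMeasure_map hZ.aemeasurable
  rw [heavyTailed_iff_heavyTailed_map (hY.add hZ), hYZ.map_add_eq_map_conv_map hY hZ]
  refine ((heavyTailed_iff_heavyTailed_map hY).mp hY_heavy).conv ?_
  rw [Measure.map_map measurable_neg hZ]
  exact hZ_symm

end HeavyTailed

theorem heavyTailed_linear_combination_general
    {Ω : Type*} [MeasurableSpace Ω] (μ : Measure Ω) [IsProbabilityMeasure μ]
    (n : ℕ) (X : Fin n → Ω → ℝ) (hX : ∀ i, Measurable (X i))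
    (hindep : iIndepFun X μ)
    (i₀ : Fin n) (hheavy : HeavyTailed μ (X i₀))
    (hsymm : ∀ i, i ≠ i₀ → Measure.map (X i) μ = Measure.map (fun ω => -(X i ω)) μ)
    (c : Fin n → ℝ) (hc : c i₀ ≠ 0) :
    HeavyTailed μ (fun ω => ∑ i, c i * X i ω) := by
  set Y : Fin n → Ω → ℝ := fun i ω => c i * X i ω
  have hY (i : Fin n) : Measurable (Y i) := (hX i).const_mul (c i)
  have hY_indep : iIndepFun Y μ := hindep.comp (fun i x => c i * x) fun i => measurable_const_mul _
  have hsum : (fun ω => ∑ i, c i * X i ω) = Y i₀ + ∑ i ∈ Finset.univ.erase i₀, Y i := by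
    rw [Finset.add_sum_erase _ _ (Finset.mem_univ i₀)]
    funext ω
    simp [Y]
  rw [hsum]
  refine (hheavy.const_mul hc).add_of_indepFun
    (hY_indep.indepFun_finsetSum_of_notMem hY (Finset.notMem_erase i₀ _)).symm (hY i₀)
    (Finset.measurable_sum' _ hY) ?_
  refine hY_indep.map_neg_finsetSum_eq hY _ fun i hi => ?_
  exact map_neg_const_mul_eq (hX i) (hsymm i (Finset.ne_of_mem_erase hi)).symm (c i)

/-- If `X₁, …, X_n` are independent, `X_{i₀}` is heavy-tailed and the other `X_i` are symmetric
continuous random variables (with densities), then `∑ i, c_i X_i` with `c_{i₀} ≠ 0` is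
heavy-tailed. -/
theorem heavyTailed_linear_combination
    {Ω : Type*} [MeasurableSpace Ω] (μ : Measure Ω) [IsProbabilityMeasure μ]
    (n : ℕ) (X : Fin n → Ω → ℝ) (hX : ∀ i, Measurable (X i))
    (hindep : iIndepFun X μ)
    (i₀ : Fin n) (hheavy : HeavyTailed μ (X i₀))
    (hsymm : ∀ i, i ≠ i₀ → Measure.map (X i) μ = Measure.map (fun ω => -(X i ω)) μ)
    (f : Fin n → ℝ → ℝ≥0∞) (hf : ∀ i, i ≠ i₀ → Measurable (f i))
    (hdens : ∀ i, i ≠ i₀ → Measure.map (X i) μ = volume.withDensity (f i))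
    (c : Fin n → ℝ) (hc : c i₀ ≠ 0) :
    HeavyTailed μ (fun ω => ∑ i, c i * X i ω) :=
  heavyTailed_linear_combination_general μ n X hX hindep i₀ hheavy hsymm c hc
end
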